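/- arXiv:1602.06475 — 2 statements merged into one kernel-verified Lean document; each statement's English description precedes it below -/
import Mathlib

section
/- Let H = (U ∪ {s}, F) be a finite connected multigraph without loop-edges with sink vertex s, let η be a stable sandpile on H and let x ∈ U satisfy η(x) = deg_H(x) − 1, so that η + 1_x is unstable at x. Let W_1, …, W_N be the waves of the stabilization of η + 1_x. Then for every y ∈ U the number of indices i ∈ {1,…,N} with y ∈ W_i equals n(x,y;η), the number of times y topples during the stabilization of η + 1_x; in particular the total number of waves satisfies N = n(x,x;η). -/
/-!
Concatenating the waves gives a legal toppling sequence of `η + 1_x` ending in a stable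
configuration. By the least action principle every legal toppling sequence is a
sub-multiset of every legal stabilizing one, so all legal stabilizing sequences are
permutations of each other and record the same toppling numbers. Each wave topples every
vertex at most once and `x` exactly once, so `y` lies in as many waves as it topples in the
concatenation, and the waves are as many as the topplings of `x`.
-/

/-- A finite connected multigraph without loop-edges, with a distinguished sink vertex.
`mult x y` is the number of edges joining `x` and `y`. -/
structure SandpileGraph (V : Type*) [Fintype V] [DecidableEq V] where
  sink : V
  mult : V → V → ℕ
  symm : ∀ x y, mult x y = mult y x
  loopless : ∀ x, mult x x = 0
  conn : ∀ x : V, Relation.ReflTransGen (fun a b => 0 < mult a b) x sink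

namespace SandpileGraph

variable {V : Type*} [Fintype V] [DecidableEq V]

/-- The degree of a vertex. -/
def deg (H : SandpileGraph V) (x : V) : ℕ := ∑ y, H.mult x y

/-- Toppling of the vertex `x`: `x` sends one grain along each incident edge;
grains reaching the sink are lost. -/
def topple (H : SandpileGraph V) (x : V) (η : V → ℕ) : V → ℕ :=
  fun y => if y = x then η y - H.deg x else if y = H.sink then η y else η y + H.mult x y

/-- Legality of a finite sequence of topplings: each toppled vertex is a non-sink vertex
that is unstable at the moment it is toppled. -/
def LegalSeq (H : SandpileGraph V) : (V → ℕ) → List V → Prop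
  | _, [] => True
  | η, x :: l => x ≠ H.sink ∧ H.deg x ≤ η x ∧ H.LegalSeq (H.topple x η) l

/-- The result of performing a sequence of topplings. -/
def toppleList (H : SandpileGraph V) : (V → ℕ) → List V → (V → ℕ)
  | η, [] => η
  | η, x :: l => H.toppleList (H.topple x η) l

/-- A configuration is stable if every non-sink vertex has fewer grains than its degree. -/
def Stable (H : SandpileGraph V) (η : V → ℕ) : Prop :=
  ∀ x, x ≠ H.sink → η x < H.deg x

/-- Addition of one grain at `x`. -/
def addGrain (x : V) (η : V → ℕ) : V → ℕ := Function.update η x (η x + 1)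

/-- A wave started at `x` from the configuration `η` (with `η` unstable at `x`):
`x` is toppled once, and then all topplings are carried out that are possible without
toppling `x` a second time, so that at the end every non-sink vertex other than `x` is
stable; each vertex topples at most once.  The list `l` records the toppled vertices in a
legal order; the wave is the set of entries of `l`. -/
def IsWaveList (H : SandpileGraph V) (x : V) (η : V → ℕ) (l : List V) : Prop :=
  l.Nodup ∧ x ∈ l ∧ H.LegalSeq η l ∧
    ∀ v, v ≠ H.sink → v ≠ x → H.toppleList η l v < H.deg v

end SandpileGraph

/-- The wave decomposition of the stabilization of `η`: repeatedly carry out waves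
(toppling `x` exactly once per wave) while `x` is unstable, ending at a stable
configuration. -/
inductive IsWaveDecomp {V : Type*} [Fintype V] [DecidableEq V] (H : SandpileGraph V) (x : V) :
    (V → ℕ) → List (List V) → Prop
  | nil (η : V → ℕ) : H.Stable η → IsWaveDecomp H x η []
  | cons (η : V → ℕ) (w : List V) (ws : List (List V)) :
      H.deg x ≤ η x → H.IsWaveList x η w →
      IsWaveDecomp H x (H.toppleList η w) ws → IsWaveDecomp H x η (w :: ws)

theorem List.countP_mem_eq_count_flatten {α : Type*} [DecidableEq α] {Ws : List (List α)}
    (h : ∀ w ∈ Ws, w.Nodup) (y : α) :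
    Ws.countP (fun w => decide (y ∈ w)) = Ws.flatten.count y := by
  induction Ws with
  | nil => rfl
  | cons w Ws ih =>
    rw [List.countP_cons, List.flatten_cons, List.count_append,
      (h w List.mem_cons_self).count, ih fun v hv => h v (List.mem_cons_of_mem _ hv)]
    by_cases hy : y ∈ w <;> simp [hy, Nat.add_comm]

namespace SandpileGraph

variable {V : Type*} [Fintype V] [DecidableEq V] (H : SandpileGraph V)

def IsStabilizing (η : V → ℕ) (l : List V) : Prop :=
  H.LegalSeq η l ∧ H.Stable (H.toppleList η l)

variable {H}

theorem le_topple_of_ne {x y : V} (η : V → ℕ) (h : y ≠ x) : η y ≤ H.topple x η y := by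
  unfold topple
  rw [if_neg h]
  split <;> omega

theorem le_toppleList_of_not_mem {y : V} {l : List V} (h : y ∉ l) (η : V → ℕ) :
    η y ≤ H.toppleList η l y := by
  induction l generalizing η with
  | nil => exact le_rfl
  | cons v l ih =>
    rw [List.mem_cons, not_or] at h
    exact (le_topple_of_ne η h.1).trans (ih h.2 _)

theorem topple_comm {x y : V} (hxy : x ≠ y) {η : V → ℕ} (hx : H.deg x ≤ η x)
    (hy : H.deg y ≤ η y) : H.topple x (H.topple y η) = H.topple y (H.topple x η) := by
  funext z
  have := H.symm x y
  unfold topple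
  split_ifs <;> subst_vars <;> simp_all <;> omega

theorem toppleList_append (l₁ l₂ : List V) (η : V → ℕ) :
    H.toppleList η (l₁ ++ l₂) = H.toppleList (H.toppleList η l₁) l₂ := by
  induction l₁ generalizing η with
  | nil => rfl
  | cons v l₁ ih => exact ih _

theorem legalSeq_append {l₁ l₂ : List V} {η : V → ℕ} :
    H.LegalSeq η (l₁ ++ l₂) ↔ H.LegalSeq η l₁ ∧ H.LegalSeq (H.toppleList η l₁) l₂ := by
  induction l₁ generalizing η with
  | nil => simp [LegalSeq, toppleList]
  | cons v l₁ ih =>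
    simp only [List.cons_append, LegalSeq, toppleList, ih]
    tauto

/-- An unstable vertex stays unstable until it topples, so its first toppling can be moved to
the front; the topplings commute because each toppled vertex has at least its degree. -/
theorem LegalSeq.moveToFront {a b : List V} {y : V} {η : V → ℕ} (hya : y ∉ a)
    (hy : H.deg y ≤ η y) (hy' : y ≠ H.sink) (h : H.LegalSeq η (a ++ y :: b)) :
    H.LegalSeq η (y :: (a ++ b)) ∧
      H.toppleList η (a ++ y :: b) = H.toppleList η (y :: (a ++ b)) := by
  induction a generalizing η with
  | nil => exact ⟨h, rfl⟩
  | cons v a ih =>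
    rw [List.mem_cons, not_or] at hya
    obtain ⟨hv, hvη, hrest⟩ := h
    obtain ⟨⟨-, -, hrest'⟩, heq⟩ :=
      ih hya.2 (hy.trans (le_topple_of_ne η hya.1)) hrest
    have hcomm := topple_comm hya.1 hy hvη
    refine ⟨⟨hy', hy, hv, hvη.trans (le_topple_of_ne η (Ne.symm hya.1)), hcomm ▸ hrest'⟩, ?_⟩
    change H.toppleList (H.topple v η) (a ++ y :: b) = _
    rw [heq]
    exact congrArg (H.toppleList · (a ++ b)) hcomm

theorem LegalSeq.subperm_of_isStabilizing {m l : List V} {η : V → ℕ} (hm : H.LegalSeq η m)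
    (hl : H.IsStabilizing η l) : m.Subperm l := by
  induction m generalizing η l with
  | nil => exact List.nil_subperm
  | cons z m ih =>
    obtain ⟨hz, hzη, hm'⟩ := hm
    have hzl : z ∈ l := by
      by_contra hzl
      exact (hl.2 z hz).not_ge (hzη.trans (le_toppleList_of_not_mem hzl η))
    obtain ⟨a, b, rfl, hza⟩ := List.eq_append_cons_of_mem hzl
    obtain ⟨⟨-, -, hab⟩, heq⟩ := hl.1.moveToFront hza hzη hz
    have hmab : m.Subperm (a ++ b) := ih hm' ⟨hab, heq ▸ hl.2⟩
    exact ((List.subperm_cons z).2 hmab).trans List.perm_middle.symm.subperm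

theorem IsStabilizing.perm {m l : List V} {η : V → ℕ} (hm : H.IsStabilizing η m)
    (hl : H.IsStabilizing η l) : m.Perm l :=
  (hm.1.subperm_of_isStabilizing hl).antisymm (hl.1.subperm_of_isStabilizing hm)

end SandpileGraph

namespace IsWaveDecomp

open SandpileGraph

variable {V : Type*} [Fintype V] [DecidableEq V] {H : SandpileGraph V} {x : V}
  {η : V → ℕ} {Ws : List (List V)}

theorem isStabilizing_flatten (h : IsWaveDecomp H x η Ws) : H.IsStabilizing η Ws.flatten := by
  induction h with
  | nil η hst => exact ⟨trivial, hst⟩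
  | cons η w ws _ hw _ ih =>
    rw [List.flatten_cons]
    exact ⟨legalSeq_append.2 ⟨hw.2.2.1, ih.1⟩, (toppleList_append w _ η).symm ▸ ih.2⟩

theorem exists_isWaveList (h : IsWaveDecomp H x η Ws) :
    ∀ w ∈ Ws, ∃ η', H.IsWaveList x η' w := by
  induction h with
  | nil => simp
  | cons η w ws _ hw _ ih =>
    simp only [List.mem_cons, forall_eq_or_imp]
    exact ⟨⟨η, hw⟩, ih⟩

end IsWaveDecomp

open SandpileGraph in
/-- Here `n(x,y;η)` is read off as `l.count y` for an arbitrary legal stabilizing toppling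
sequence `l` of `η + 1_x`. -/
theorem waves_count_eq_toppling_numbers_general
    {V : Type*} [Fintype V] [DecidableEq V] (H : SandpileGraph V)
    (η : V → ℕ)
    (x : V)
    (Ws : List (List V)) (hWs : IsWaveDecomp H x (addGrain x η) Ws)
    (l : List V) (hleg : H.LegalSeq (addGrain x η) l)
    (hstab : H.Stable (H.toppleList (addGrain x η) l)) :
    (∀ y : V, y ≠ H.sink → Ws.countP (fun w => decide (y ∈ w)) = l.count y) ∧
      Ws.length = l.count x := by
  have hperm := hWs.isStabilizing_flatten.perm ⟨hleg, hstab⟩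
  have hnodup : ∀ w ∈ Ws, w.Nodup := fun w hw => (hWs.exists_isWaveList w hw).choose_spec.1
  have hmem : ∀ w ∈ Ws, x ∈ w := fun w hw => (hWs.exists_isWaveList w hw).choose_spec.2.1
  have hcount y : Ws.countP (fun w => decide (y ∈ w)) = l.count y :=
    (List.countP_mem_eq_count_flatten hnodup y).trans (hperm.count_eq y)
  refine ⟨fun y _ => hcount y, ?_⟩
  rw [← hcount, List.countP_eq_length.2 fun w hw => decide_eq_true (hmem w hw)]

open SandpileGraph in
/-- **Waves and toppling numbers.**  If `η` is stable and `η x = deg x - 1`, then for the wave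
decomposition `Ws` of the stabilization of `η + 1_x` and any legal stabilizing toppling
sequence `l` of `η + 1_x`: every `y ∈ U` belongs to exactly `n(x,y;η) = l.count y` of the
waves, and the number of waves equals `n(x,x;η) = l.count x`. -/
theorem waves_count_eq_toppling_numbers
    {V : Type*} [Fintype V] [DecidableEq V] (H : SandpileGraph V)
    (η : V → ℕ) (hηstable : H.Stable η)
    (x : V) (hx : x ≠ H.sink) (hηx : η x = H.deg x - 1)
    (Ws : List (List V)) (hWs : IsWaveDecomp H x (addGrain x η) Ws)
    (l : List V) (hleg : H.LegalSeq (addGrain x η) l)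
    (hstab : H.Stable (H.toppleList (addGrain x η) l)) :
    (∀ y : V, y ≠ H.sink → Ws.countP (fun w => decide (y ∈ w)) = l.count y) ∧
      Ws.length = l.count x :=
  waves_count_eq_toppling_numbers_general H η x Ws hWs l hleg hstab
end

section
/- Let d ≥ 1 and let μ be a probability measure on spanning forests of the nearest-neighbour lattice ℤ^d that is invariant under all translations of ℤ^d and such that μ-almost surely every component is an infinite tree with one end. For x ∈ ℤ^d write T_x for the component containing x, past_x for the set of vertices y such that the unique infinite self-avoiding path in T_y started at y passes through x, D_x(r) for the ℓ∞-ball of radius r around x, and diam(A) = sup{ ‖v − o‖∞ : v ∈ A }. Then for every r ≥ 1: μ( diam(past_o) > r ) ≥ Σ_{x : r < ‖x‖∞ ≤ 2r} μ( o ∈ past_x )² / E_μ[ |T_o ∩ D_o(4r)| · 1_{o ∈ past_x} ], where a summand is interpreted as 0 if μ( o ∈ past_x ) = 0. -/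
open MeasureTheory
open scoped ENNReal

/-!
Mass transport. For `x` in the annulus, Cauchy–Schwarz bounds the summand of `x` by
`E[1_{o ∈ past_x} / |T_o ∩ D_o(4r)|]`, and translation invariance turns this into the expectation
of the mass `1_{-x ∈ past_o} / |T_{-x} ∩ D_{-x}(4r)|` that `o` receives from `-x`. All such `-x`
lie in `T_o ∩ D_o(2r)`, and `D_{-x}(4r) ⊇ D_o(2r)`, so the total mass received by `o` is at most
one, and it vanishes unless `past_o` leaves `D_o(r)`.

Since `past_x` is defined through rays, measurability needs the forest hypothesis: on a one-ended
forest, `y ∈ past_a` iff `y` lies in a finite component of `T ∖ {a}` (König's lemma and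
uniqueness of rays).
-/

abbrev Pt (d : ℕ) := Fin d → ℤ

/-- Lattice adjacency on `ℤ^d`. -/
def adjPt {d : ℕ} (x y : Pt d) : Prop := (∑ i, (x i - y i).natAbs) = 1

/-- ℓ∞ norm of a lattice point. -/
def linf {d : ℕ} (x : Pt d) : ℕ := Finset.univ.sup fun i => (x i).natAbs

/-- An (unordered) pair of lattice points is a lattice edge if its endpoints are adjacent. -/
def latticeEdge {d : ℕ} (ed : Sym2 (Pt d)) : Prop := ∃ x y : Pt d, adjPt x y ∧ ed = s(x, y)

/-- Configurations of edges: a subgraph of `ℤ^d` is encoded by the indicator of its edge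
set. -/
abbrev EdgeCfg (d : ℕ) := Sym2 (Pt d) → Bool

/-- The simple graph on `ℤ^d` determined by an edge configuration. -/
def cfgGraph (d : ℕ) (ω : EdgeCfg d) : SimpleGraph (Pt d) where
  Adj a b := a ≠ b ∧ ω s(a, b) = true
  symm := by
    constructor
    intro a b hab
    exact ⟨hab.1.symm, by rw [Sym2.eq_swap]; exact hab.2⟩
  loopless := by constructor; intro a ha; exact ha.1 rfl

/-- An infinite self-avoiding path (ray) from `y` in the configuration `ω`. -/
def IsRay (d : ℕ) (ω : EdgeCfg d) (y : Pt d) (γ : ℕ → Pt d) : Prop :=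
  γ 0 = y ∧ Function.Injective γ ∧ ∀ n, (cfgGraph d ω).Adj (γ n) (γ (n + 1))

/-- `ω` is a spanning forest of `ℤ^d` all of whose components are infinite trees with one
end: only lattice edges are present, there are no cycles, every component is infinite, and
any two rays in the same component have finite symmetric difference. -/
def IsOneEndedForest (d : ℕ) (ω : EdgeCfg d) : Prop :=
  (∀ ed : Sym2 (Pt d), ω ed = true → latticeEdge ed) ∧
  (cfgGraph d ω).IsAcyclic ∧
  (∀ x : Pt d, {y : Pt d | (cfgGraph d ω).Reachable x y}.Infinite) ∧
  ∀ (y₁ y₂ : Pt d) (γ₁ γ₂ : ℕ → Pt d), IsRay d ω y₁ γ₁ → IsRay d ω y₂ γ₂ →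
    (cfgGraph d ω).Reachable y₁ y₂ →
      (symmDiff (Set.range γ₁) (Set.range γ₂)).Finite

/-- The component `T_x` of `x`. -/
def compOf (d : ℕ) (ω : EdgeCfg d) (x : Pt d) : Set (Pt d) :=
  {y | (cfgGraph d ω).Reachable x y}

/-- The past of `x`: the set of `y` whose (unique) ray passes through `x`. -/
def pastOf (d : ℕ) (ω : EdgeCfg d) (x : Pt d) : Set (Pt d) :=
  {y | ∃ γ : ℕ → Pt d, IsRay d ω y γ ∧ x ∈ Set.range γ}

/-- Translation of an edge configuration by the lattice vector `v`. -/
def shiftCfg (d : ℕ) (v : Pt d) (ω : EdgeCfg d) : EdgeCfg d :=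
  fun ed => ω (Sym2.map (fun p => p - v) ed)

section LInfNorm
variable {d : ℕ}

theorem linf_le_iff {x : Pt d} {R : ℕ} : linf x ≤ R ↔ ∀ i, (x i).natAbs ≤ R :=
  Finset.sup_le_iff.trans (by simp)

@[simp]
theorem linf_zero : linf (0 : Pt d) = 0 := by
  simp [linf]

@[simp]
theorem linf_neg (x : Pt d) : linf (-x) = linf x := by
  simp [linf]

theorem linf_add_le (x y : Pt d) : linf (x + y) ≤ linf x + linf y :=
  linf_le_iff.2 fun i => (Int.natAbs_add_le _ _).trans <|
    add_le_add (linf_le_iff.1 le_rfl i) (linf_le_iff.1 le_rfl i)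

theorem linf_sub_le_one_of_adjPt {x y : Pt d} (h : adjPt x y) : linf (x - y) ≤ 1 :=
  linf_le_iff.2 fun i => h ▸ Finset.single_le_sum (f := fun j => (x j - y j).natAbs)
    (fun _ _ => Nat.zero_le _) (Finset.mem_univ i)

noncomputable def box (d R : ℕ) : Finset (Pt d) :=
  Fintype.piFinset fun _ => Finset.Icc (-(R : ℤ)) R

theorem mem_box {x : Pt d} {R : ℕ} : x ∈ box d R ↔ linf x ≤ R := by
  simp only [box, Fintype.mem_piFinset, linf_le_iff, Finset.mem_Icc, ← abs_le,
    Int.abs_eq_natAbs, Nat.cast_le]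

theorem coe_box (R : ℕ) : (box d R : Set (Pt d)) = {x | linf x ≤ R} :=
  Set.ext fun _ => mem_box

theorem finite_setOf_linf_le (R : ℕ) : {x : Pt d | linf x ≤ R}.Finite :=
  coe_box R ▸ (box d R).finite_toSet

noncomputable def annulus (d r : ℕ) : Finset (Pt d) := (box d (2 * r)).filter (r < linf ·)

theorem mem_annulus {x : Pt d} {r : ℕ} : x ∈ annulus d r ↔ r < linf x ∧ linf x ≤ 2 * r := by
  rw [annulus, Finset.mem_filter, mem_box, and_comm]

end LInfNorm

namespace SimpleGraph

variable {V : Type*} {G : SimpleGraph V}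

def ReachAvoid (G : SimpleGraph V) (F : Set V) (a z : V) : Prop :=
  ∃ p : G.Walk a z, ∀ v ∈ p.support, v ∉ F

theorem reachAvoid_empty_iff {a z : V} : G.ReachAvoid ∅ a z ↔ G.Reachable a z :=
  ⟨fun ⟨p, _⟩ => ⟨p⟩, fun ⟨p⟩ => ⟨p, fun _ _ => Set.notMem_empty _⟩⟩

theorem exists_walk_length_zero_iff {P : V → Prop} {a z : V} :
    (∃ p : G.Walk a z, p.length = 0 ∧ ∀ v ∈ p.support, P v) ↔ a = z ∧ P a := by
  constructor
  · rintro ⟨p, hp, hP⟩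
    obtain rfl := Walk.eq_of_length_eq_zero hp
    exact ⟨rfl, hP a p.start_mem_support⟩
  · rintro ⟨rfl, ha⟩
    exact ⟨.nil, rfl, by simpa⟩

theorem exists_walk_length_succ_iff {P : V → Prop} {a z : V} {n : ℕ} :
    (∃ p : G.Walk a z, p.length = n + 1 ∧ ∀ v ∈ p.support, P v) ↔
      P a ∧ ∃ b, G.Adj a b ∧ ∃ q : G.Walk b z, q.length = n ∧ ∀ v ∈ q.support, P v := by
  constructor
  · rintro ⟨_ | ⟨hab, q⟩, hp, hP⟩
    · simp at hp
    · simp only [Walk.length_cons, add_left_inj, Walk.support_cons, List.mem_cons,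
        forall_eq_or_imp] at hp hP
      exact ⟨hP.1, _, hab, q, hp, hP.2⟩
  · rintro ⟨ha, b, hab, q, hq, hP⟩
    exact ⟨.cons hab q, by simp [hq], by simpa [ha] using hP⟩

theorem reachAvoid_iff_exists_length {F : Set V} {a z : V} :
    G.ReachAvoid F a z ↔ ∃ n, ∃ p : G.Walk a z, p.length = n ∧ ∀ v ∈ p.support, v ∉ F :=
  ⟨fun ⟨p, hp⟩ => ⟨_, p, rfl, hp⟩, fun ⟨_, p, _, hp⟩ => ⟨p, hp⟩⟩

theorem ReachAvoid.exists_adj_reachAvoid_insert {F : Set V} {a z : V} (h : G.ReachAvoid F a z)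
    (hz : z ≠ a) : ∃ w, G.Adj a w ∧ G.ReachAvoid (insert a F) w z := by
  classical
  obtain ⟨p, hp⟩ := h
  have hpath := p.bypass_isPath
  have hsub := p.support_bypass_subset_support
  generalize p.bypass = q at hpath hsub
  cases q with
  | nil => exact absurd rfl hz
  | cons hadj q =>
    rw [Walk.cons_isPath_iff] at hpath
    refine ⟨_, hadj, q, fun v hv => ?_⟩
    rintro (rfl | hvF)
    · exact hpath.2 hv
    · exact hp v (hsub (List.mem_cons_of_mem _ hv)) hvF

theorem exists_adj_infinite_reachAvoid_insert (hG : ∀ v, (G.neighborSet v).Finite)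
    {F : Set V} {c : V} (hc : {z | G.ReachAvoid F c z}.Infinite) :
    ∃ w, G.Adj c w ∧ {z | G.ReachAvoid (insert c F) w z}.Infinite := by
  by_contra! h
  refine hc ((((hG c).biUnion h).insert c).subset fun z hz => ?_)
  rcases eq_or_ne z c with rfl | hzc
  · exact Set.mem_insert _ _
  · obtain ⟨w, hw, hwz⟩ := ReachAvoid.exists_adj_reachAvoid_insert hz hzc
    exact Set.mem_insert_of_mem _ (Set.mem_biUnion hw hwz)

/-- König's lemma. -/
theorem exists_ray_of_infinite_reachAvoid (hG : ∀ v, (G.neighborSet v).Finite) {F : Set V}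
    {y : V} (h : {z | G.ReachAvoid F y z}.Infinite) :
    ∃ γ : ℕ → V, γ 0 = y ∧ Function.Injective γ ∧ (∀ n, G.Adj (γ n) (γ (n + 1))) ∧
      ∀ n, γ n ∉ F := by
  have : Nonempty V := ⟨y⟩
  choose! next hadj hnext using fun (p : Set V × V) (hp : {z | G.ReachAvoid p.1 p.2 z}.Infinite) =>
    exists_adj_infinite_reachAvoid_insert hG hp
  -- `seq n` pairs the current vertex with the set still to be avoided: `F` and the vertices
  -- already visited
  let seq : ℕ → Set V × V := fun n => Nat.rec (F, y) (fun _ p => (insert p.2 p.1, next p)) n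
  have hgood : ∀ n, {z | G.ReachAvoid (seq n).1 (seq n).2 z}.Infinite := by
    intro n
    induction n with
    | zero => exact h
    | succ n ih => exact hnext _ ih
  have hnot : ∀ n, (seq n).2 ∉ (seq n).1 := fun n =>
    let ⟨_, p, hp⟩ := (hgood n).nonempty
    hp _ p.start_mem_support
  have hmono : Monotone fun n => (seq n).1 :=
    monotone_nat_of_le_succ fun _ => Set.subset_insert _ _
  refine ⟨fun n => (seq n).2, rfl, ?_, fun n => hadj _ (hgood n),
    fun n hn => hnot n (hmono (Nat.zero_le n) hn)⟩
  exact Function.Injective.of_lt_imp_ne fun m n hmn heq =>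
    hnot n (heq ▸ hmono (Nat.succ_le_of_lt hmn) (Set.mem_insert _ _))

theorem exists_walk_of_adj_seq {γ : ℕ → V} (hγ : ∀ n, G.Adj (γ n) (γ (n + 1))) {s t : ℕ}
    (hst : s ≤ t) : ∃ p : G.Walk (γ s) (γ t), ∀ v ∈ p.support, v ∈ γ '' Set.Ici s := by
  induction t, hst using Nat.le_induction with
  | base => exact ⟨.nil, fun v hv => ⟨s, Set.self_mem_Ici, (List.mem_singleton.1 hv).symm⟩⟩
  | succ t hst ih =>
    obtain ⟨p, hp⟩ := ih
    refine ⟨p.concat (hγ t), fun v hv => ?_⟩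
    rcases List.mem_append.1 (Walk.support_concat p _ ▸ hv) with hv | hv
    · exact hp v hv
    · exact ⟨t + 1, Set.mem_Ici.2 (Nat.le_succ_of_le hst), (List.mem_singleton.1 hv).symm⟩

theorem IsAcyclic.not_reachAvoid_of_adj (hG : G.IsAcyclic) {u v w : V} (hv : G.Adj u v)
    (hw : G.Adj u w) (hvw : v ≠ w) : ¬G.ReachAvoid {u} w v := by
  rintro ⟨p, hp⟩
  have := isBridge_iff_forall_walk_mem_edges.1 (isAcyclic_iff_forall_adj_isBridge.1 hG hv)
    (p.cons hw)
  rcases List.mem_cons.1 (Walk.edges_cons hw p ▸ this) with h | h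
  · exact hvw (Sym2.congr_right.1 h)
  · exact hp u (p.fst_mem_support_of_mem_edges h) rfl

/-- Two rays from the same vertex of a forest that differ somewhere are eventually disjoint, so
their ranges have infinite symmetric difference. -/
theorem IsAcyclic.eq_of_finite_symmDiff_range (hG : G.IsAcyclic) {γ δ : ℕ → V}
    (hγ : Function.Injective γ) (hγa : ∀ n, G.Adj (γ n) (γ (n + 1)))
    (hδ : Function.Injective δ) (hδa : ∀ n, G.Adj (δ n) (δ (n + 1))) (h0 : γ 0 = δ 0)
    (hfin : (symmDiff (Set.range γ) (Set.range δ)).Finite) : γ = δ := by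
  classical
  by_contra hne
  have hex : ∃ n, γ n ≠ δ n := Function.ne_iff.1 hne
  obtain ⟨m, hm⟩ : ∃ m, Nat.find hex = m + 1 :=
    Nat.exists_eq_succ_of_ne_zero fun h => (h ▸ Nat.find_spec hex) h0
  have hagree : ∀ k ≤ m, γ k = δ k := fun k hk => not_not.1 (Nat.find_min hex (by omega))
  have hdiff : γ (m + 1) ≠ δ (m + 1) := hm ▸ Nat.find_spec hex
  have hdisj : ∀ i j, m + 1 ≤ i → m + 1 ≤ j → γ i ≠ δ j := by
    intro i j hi hj hij
    obtain ⟨p, hp⟩ := exists_walk_of_adj_seq hγa hi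
    obtain ⟨q, hq⟩ := exists_walk_of_adj_seq hδa hj
    refine hG.not_reachAvoid_of_adj (hγa m) (hagree m le_rfl ▸ hδa m) hdiff
      ⟨q.append (p.copy rfl hij).reverse, fun v hv hvu => ?_⟩
    rw [Set.mem_singleton_iff] at hvu
    subst hvu
    rcases (Walk.mem_support_append_iff _ _).1 hv with hv | hv
    · obtain ⟨k, hk, hkm⟩ := hq _ hv
      exact absurd (hδ (hkm.trans (hagree m le_rfl))) (by simp at hk; omega)
    · rw [Walk.support_reverse, List.mem_reverse, Walk.support_copy] at hv
      obtain ⟨k, hk, hkm⟩ := hp _ hv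
      exact absurd (hγ hkm) (by simp at hk; omega)
  refine ((Set.Ici_infinite (m + 1)).image hγ.injOn) (hfin.subset ?_)
  rintro _ ⟨i, hi, rfl⟩
  refine Or.inl ⟨⟨i, rfl⟩, ?_⟩
  rintro ⟨j, hj⟩
  rcases le_or_gt j m with hjm | hjm
  · exact absurd (hγ ((hagree j hjm).trans hj)) (by simp at hi; omega)
  · exact hdisj i j hi hjm hj.symm

end SimpleGraph

open SimpleGraph

section Forest
variable {d : ℕ} {ω : EdgeCfg d}

theorem finite_neighborSet_cfgGraph (hω : ∀ ed, ω ed = true → latticeEdge ed) (c : Pt d) :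
    ((cfgGraph d ω).neighborSet c).Finite := by
  refine ((finite_setOf_linf_le 1).image (c + ·)).subset fun w hw => ⟨w - c, ?_, add_sub_cancel c w⟩
  obtain ⟨x, y, hxy, he⟩ := hω _ hw.2
  rcases Sym2.eq_iff.1 he with ⟨rfl, rfl⟩ | ⟨rfl, rfl⟩
  · rw [Set.mem_ofPred_eq, ← neg_sub, linf_neg]
    exact linf_sub_le_one_of_adjPt hxy
  · exact linf_sub_le_one_of_adjPt hxy

theorem IsOneEndedForest.ray_unique (hω : IsOneEndedForest d ω) {y : Pt d} {γ δ : ℕ → Pt d}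
    (hγ : IsRay d ω y γ) (hδ : IsRay d ω y δ) : γ = δ :=
  hω.2.1.eq_of_finite_symmDiff_range hγ.2.1 hγ.2.2 hδ.2.1 hδ.2.2 (hγ.1.trans hδ.1.symm)
    (hω.2.2.2 y y γ δ hγ hδ .rfl)

theorem reachable_of_mem_pastOf {a y : Pt d} (h : y ∈ pastOf d ω a) :
    (cfgGraph d ω).Reachable a y := by
  obtain ⟨γ, ⟨rfl, -, hadj⟩, k, rfl⟩ := h
  obtain ⟨p, -⟩ := exists_walk_of_adj_seq hadj (Nat.zero_le k)
  exact ⟨p.reverse⟩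

/-- This makes membership in the past a Borel condition on one-ended forests. -/
theorem mem_pastOf_iff_finite_reachAvoid (hω : IsOneEndedForest d ω) {a y : Pt d} :
    y ∈ pastOf d ω a ↔ {z | (cfgGraph d ω).ReachAvoid {a} y z}.Finite := by
  have hlf := finite_neighborSet_cfgGraph hω.1
  constructor
  · rintro ⟨γ, hγ, k, rfl⟩
    by_contra hinf
    obtain ⟨δ, h0, hinj, hadj, havoid⟩ := exists_ray_of_infinite_reachAvoid hlf hinf
    exact havoid k (by rw [← hω.ray_unique hγ ⟨h0, hinj, hadj⟩]; rfl)
  · intro hfin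
    have hinf : {z | (cfgGraph d ω).ReachAvoid ∅ y z}.Infinite := by
      simpa only [reachAvoid_empty_iff] using hω.2.2.1 y
    obtain ⟨γ, h0, hinj, hadj, -⟩ := exists_ray_of_infinite_reachAvoid hlf hinf
    obtain ⟨_, ⟨m, rfl⟩, hm⟩ := Set.not_subset.1 fun h => Set.infinite_range_of_injective hinj
      (hfin.subset h)
    refine ⟨γ, ⟨h0, hinj, hadj⟩, by_contra fun ha => hm ?_⟩
    obtain ⟨p, hp⟩ := exists_walk_of_adj_seq hadj (Nat.zero_le m)
    refine ⟨p.copy h0 rfl, fun v hv hva => ha ?_⟩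
    rw [Walk.support_copy] at hv
    obtain ⟨k, -, rfl⟩ := hp v hv
    exact ⟨k, hva⟩

end Forest

section Shift
variable {d : ℕ}

theorem measurable_shiftCfg (v : Pt d) : Measurable (shiftCfg d v) :=
  measurable_pi_lambda _ fun _ => measurable_pi_apply _

def shiftIso (v : Pt d) (ω : EdgeCfg d) : cfgGraph d (shiftCfg d v ω) ≃g cfgGraph d ω where
  toEquiv := Equiv.subRight v
  map_rel_iff' := by simp [cfgGraph, shiftCfg]

theorem reachable_shiftCfg_iff {v a z : Pt d} {ω : EdgeCfg d} :
    (cfgGraph d (shiftCfg d v ω)).Reachable a z ↔ (cfgGraph d ω).Reachable (a - v) (z - v) :=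
  (shiftIso v ω).reachable_iff.symm

theorem sub_mem_pastOf_of_mem_pastOf_shiftCfg {v a y : Pt d} {ω : EdgeCfg d}
    (h : y ∈ pastOf d (shiftCfg d v ω) a) : y - v ∈ pastOf d ω (a - v) := by
  obtain ⟨γ, ⟨rfl, hinj, hadj⟩, k, rfl⟩ := h
  exact ⟨fun n => γ n - v, ⟨rfl, fun m n h => hinj (sub_left_injective h),
    fun n => (shiftIso v ω).map_adj_iff.2 (hadj n)⟩, k, rfl⟩

end Shift

section Measurability
variable {d : ℕ}

theorem measurable_cfgGraph_adj (a b : Pt d) :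
    Measurable fun ω : EdgeCfg d => (cfgGraph d ω).Adj a b :=
  measurable_const.and (by fun_prop)

theorem measurable_reachAvoid (F : Set (Pt d)) (a z : Pt d) :
    Measurable fun ω : EdgeCfg d => (cfgGraph d ω).ReachAvoid F a z := by
  have hlen : ∀ n (a : Pt d), Measurable fun ω : EdgeCfg d =>
      ∃ p : (cfgGraph d ω).Walk a z, p.length = n ∧ ∀ v ∈ p.support, v ∉ F := by
    intro n
    induction n with
    | zero =>
      simp_rw [exists_walk_length_zero_iff]
      exact fun _ => measurable_const
    | succ n ih =>
      simp_rw [exists_walk_length_succ_iff]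
      exact fun a =>
        measurable_const.and (.exists fun b => (measurable_cfgGraph_adj a b).and (ih b))
  simp_rw [reachAvoid_iff_exists_length]
  exact .exists fun n => hlen n a

theorem measurable_finite_reachAvoid (F : Set (Pt d)) (y : Pt d) :
    Measurable fun ω : EdgeCfg d => {z | (cfgGraph d ω).ReachAvoid F y z}.Finite := by
  have hfin (s : Set (Pt d)) : s.Finite ↔ ∃ S : Finset (Pt d), ∀ z, z ∈ s → z ∈ S :=
    ⟨fun h => ⟨h.toFinset, fun _ => h.mem_toFinset.2⟩, fun ⟨S, hS⟩ => S.finite_toSet.subset hS⟩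
  simp_rw [hfin, Set.mem_ofPred_eq]
  exact .exists fun S => .forall fun z => (measurable_reachAvoid F y z).imp measurable_const

theorem nullMeasurableSet_pastOf {μ : Measure (EdgeCfg d)}
    (hforest : ∀ᵐ ω ∂μ, IsOneEndedForest d ω) (a y : Pt d) :
    NullMeasurableSet {ω | y ∈ pastOf d ω a} μ :=
  (measurable_finite_reachAvoid {a} y).setOf.nullMeasurableSet.congr <|
    hforest.mono fun _ hω => propext (mem_pastOf_iff_finite_reachAvoid hω).symm

/-- `|T_o ∩ D_o(R)|`. -/
noncomputable def compBallCard (d R : ℕ) (ω : EdgeCfg d) : ℝ≥0∞ :=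
  (compOf d ω 0 ∩ {p | linf p ≤ R}).ncard

theorem compBallCard_ne_zero (R : ℕ) (ω : EdgeCfg d) : compBallCard d R ω ≠ 0 := by
  rw [compBallCard, Nat.cast_ne_zero]
  exact Set.ncard_ne_zero_of_mem ⟨.rfl, by simp⟩ ((finite_setOf_linf_le R).inter_of_right _)

theorem measurable_compBallCard (R : ℕ) : Measurable (compBallCard d R) := by
  classical
  have hcard (ω : EdgeCfg d) : compOf d ω 0 ∩ {p | linf p ≤ R} =
      ↑((box d R).filter fun p => (cfgGraph d ω).Reachable 0 p) := by
    ext p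
    simp [compOf, mem_box, and_comm]
  unfold compBallCard
  simp_rw [hcard, Set.ncard_coe_finset, Finset.card_filter, Nat.cast_sum,
    Nat.cast_ite, Nat.cast_one, Nat.cast_zero]
  refine Finset.measurable_sum _ fun p _ => Measurable.ite ?_ measurable_const measurable_const
  simpa only [reachAvoid_empty_iff] using (measurable_reachAvoid ∅ 0 p).setOf

end Measurability

section CauchySchwarz
variable {α : Type*} [MeasurableSpace α] {μ : Measure α}

theorem measure_univ_sq_le_lintegral_mul_lintegral_inv {f : α → ℝ≥0∞} (hf : AEMeasurable f μ)
    (h0 : ∀ a, f a ≠ 0) (htop : ∀ a, f a ≠ ∞) :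
    μ Set.univ ^ 2 ≤ (∫⁻ a, f a ∂μ) * ∫⁻ a, (f a)⁻¹ ∂μ := by
  have hsqrt (a : α) : f a ^ (1 / 2 : ℝ) * (f a)⁻¹ ^ (1 / 2 : ℝ) = 1 := by
    rw [← ENNReal.mul_rpow_of_nonneg _ _ (by norm_num), ENNReal.mul_inv_cancel (h0 a) (htop a),
      ENNReal.one_rpow]
  have hsq (x : ℝ≥0∞) : (x ^ (1 / 2 : ℝ)) ^ (2 : ℝ) = x := by
    rw [← ENNReal.rpow_mul]; norm_num
  have hCS := ENNReal.lintegral_mul_le_Lp_mul_Lq μ Real.HolderConjugate.two_two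
    (hf.pow_const (1 / 2 : ℝ)) (hf.inv.pow_const (1 / 2 : ℝ))
  simp only [Pi.mul_apply, Pi.inv_apply, hsqrt, hsq, lintegral_one] at hCS
  calc μ Set.univ ^ 2
      ≤ ((∫⁻ a, f a ∂μ) ^ (1 / 2 : ℝ) * (∫⁻ a, (f a)⁻¹ ∂μ) ^ (1 / 2 : ℝ)) ^ 2 :=
        pow_le_pow_left' hCS 2
    _ = (∫⁻ a, f a ∂μ) * ∫⁻ a, (f a)⁻¹ ∂μ := by
        rw [mul_pow, ← ENNReal.rpow_two, ← ENNReal.rpow_two, hsq, hsq]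

theorem measure_sq_div_lintegral_indicator_le {A : Set α} (hA : NullMeasurableSet A μ)
    {f : α → ℝ≥0∞} (hf : AEMeasurable f μ) (h0 : ∀ a, f a ≠ 0) (htop : ∀ a, f a ≠ ∞) :
    μ A ^ 2 / ∫⁻ a, A.indicator f a ∂μ ≤ ∫⁻ a, A.indicator f⁻¹ a ∂μ := by
  rw [lintegral_indicator₀ hA, lintegral_indicator₀ hA, ← Measure.restrict_apply_univ]
  exact ENNReal.div_le_of_le_mul <|
    (measure_univ_sq_le_lintegral_mul_lintegral_inv hf.restrict h0 htop).trans_eq (mul_comm _ _)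

end CauchySchwarz

theorem MeasureTheory.MeasurePreserving.lintegral_comp_of_aemeasurable {α β : Type*}
    [MeasurableSpace α] [MeasurableSpace β] {μ : Measure α} {ν : Measure β} {g : α → β}
    (hg : MeasurePreserving g μ ν) {f : β → ℝ≥0∞} (hf : AEMeasurable f ν) :
    ∫⁻ a, f (g a) ∂μ = ∫⁻ b, f b ∂ν := by
  rw [← hg.map_eq] at hf ⊢
  exact (lintegral_map' hf hg.measurable.aemeasurable).symm

section MassTransport
variable {d : ℕ} {μ : Measure (EdgeCfg d)}

theorem measurePreserving_shiftCfg (hinv : ∀ v : Pt d, μ.map (shiftCfg d v) = μ) (v : Pt d) :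
    MeasurePreserving (shiftCfg d v) μ μ :=
  ⟨measurable_shiftCfg v, hinv v⟩

theorem aemeasurable_indicator_pastOf (hforest : ∀ᵐ ω ∂μ, IsOneEndedForest d ω) (R : ℕ)
    (x : Pt d) : AEMeasurable ({ω | 0 ∈ pastOf d ω x}.indicator (compBallCard d R)⁻¹) μ :=
  (measurable_compBallCard R).inv.aemeasurable.indicator₀ (nullMeasurableSet_pastOf hforest x 0)

theorem sq_measure_pastOf_div_le (hinv : ∀ v : Pt d, μ.map (shiftCfg d v) = μ)
    (hforest : ∀ᵐ ω ∂μ, IsOneEndedForest d ω) (R : ℕ) (x : Pt d) :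
    μ {ω | 0 ∈ pastOf d ω x} ^ 2 / ∫⁻ ω, {ω | 0 ∈ pastOf d ω x}.indicator (compBallCard d R) ω ∂μ
      ≤ ∫⁻ ω, {ω | 0 ∈ pastOf d ω x}.indicator (compBallCard d R)⁻¹ (shiftCfg d x ω) ∂μ := by
  rw [(measurePreserving_shiftCfg hinv x).lintegral_comp_of_aemeasurable
    (aemeasurable_indicator_pastOf hforest R x)]
  exact measure_sq_div_lintegral_indicator_le (nullMeasurableSet_pastOf hforest x 0)
    (measurable_compBallCard R).aemeasurable (compBallCard_ne_zero R)
    fun _ => ENNReal.natCast_ne_top _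

theorem ncard_le_compBallCard_shiftCfg {ω : EdgeCfg d} {x : Pt d} {r : ℕ}
    (hx : -x ∈ pastOf d ω 0) (hxr : linf x ≤ 2 * r) :
    ((compOf d ω 0 ∩ {p | linf p ≤ 2 * r}).ncard : ℝ≥0∞) ≤
      compBallCard d (4 * r) (shiftCfg d x ω) := by
  rw [compBallCard, Nat.cast_le, ← Set.ncard_image_of_injective _ (add_left_injective x)]
  refine Set.ncard_le_ncard ?_ ((finite_setOf_linf_le _).inter_of_right _)
  rintro _ ⟨p, ⟨hp, hpr⟩, rfl⟩
  refine ⟨reachable_shiftCfg_iff.2 ?_, (linf_add_le p x).trans ?_⟩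
  · simpa using (reachable_of_mem_pastOf hx).symm.trans hp
  · simp only [Set.mem_ofPred_eq] at hpr
    omega

theorem sum_annulus_indicator_pastOf_shiftCfg_le (ω : EdgeCfg d) (r : ℕ) :
    ∑ x ∈ annulus d r,
        {ω' | 0 ∈ pastOf d ω' x}.indicator (compBallCard d (4 * r))⁻¹ (shiftCfg d x ω) ≤
      {ω' | ∃ v ∈ pastOf d ω' 0, r < linf v}.indicator 1 ω := by
  classical
  set Q := (annulus d r).filter fun x => -x ∈ pastOf d ω 0
  set C := (compOf d ω 0 ∩ {p | linf p ≤ 2 * r}).ncard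
  have hQ : Q.card ≤ C := by
    rw [← Set.ncard_coe_finset, ← Set.ncard_image_of_injective _ neg_injective]
    refine Set.ncard_le_ncard ?_ ((finite_setOf_linf_le _).inter_of_right _)
    rintro _ ⟨x, hx, rfl⟩
    rw [Finset.mem_coe, Finset.mem_filter, mem_annulus] at hx
    exact ⟨reachable_of_mem_pastOf hx.2, by simpa using hx.1.2⟩
  have hterm : ∀ x ∈ annulus d r,
      {ω' | 0 ∈ pastOf d ω' x}.indicator (compBallCard d (4 * r))⁻¹ (shiftCfg d x ω) ≤
        if -x ∈ pastOf d ω 0 then (C : ℝ≥0∞)⁻¹ else 0 := by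
    intro x hx
    by_cases hxP : shiftCfg d x ω ∈ {ω' | 0 ∈ pastOf d ω' x}
    · have hpast : -x ∈ pastOf d ω 0 := by
        simpa using sub_mem_pastOf_of_mem_pastOf_shiftCfg hxP
      rw [Set.indicator_of_mem hxP, if_pos hpast, Pi.inv_apply]
      exact ENNReal.inv_le_inv.2 (ncard_le_compBallCard_shiftCfg hpast (mem_annulus.1 hx).2)
    · rw [Set.indicator_of_notMem hxP]
      exact zero_le
  calc _ ≤ ∑ x ∈ annulus d r, if -x ∈ pastOf d ω 0 then (C : ℝ≥0∞)⁻¹ else 0 :=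
        Finset.sum_le_sum hterm
    _ = Q.card / C := by
        rw [← Finset.sum_filter, Finset.sum_const, nsmul_eq_mul, div_eq_mul_inv]
    _ ≤ _ := ?_
  rcases Q.eq_empty_or_nonempty with hQe | ⟨x, hx⟩
  · simp [hQe]
  · rw [Finset.mem_filter, mem_annulus] at hx
    have hω : ω ∈ {ω' | ∃ v ∈ pastOf d ω' 0, r < linf v} := ⟨-x, hx.2, by simpa using hx.1.1⟩
    rw [Set.indicator_of_mem hω, Pi.one_apply]
    exact ENNReal.div_le_of_le_mul (by rw [one_mul]; exact_mod_cast hQ)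

end MassTransport

theorem mass_transport_diam_past_general (d : ℕ)
    (μ : Measure (EdgeCfg d))
    (hinv : ∀ v : Pt d, μ.map (shiftCfg d v) = μ)
    (hforest : ∀ᵐ ω ∂μ, IsOneEndedForest d ω)
    (r : ℕ) :
    μ {ω | ∃ v ∈ pastOf d ω 0, r < linf v} ≥
      ∑' x : Pt d,
        if r < linf x ∧ linf x ≤ 2 * r then
          (μ {ω | (0 : Pt d) ∈ pastOf d ω x}) ^ 2 /
            ∫⁻ ω, Set.indicator {ω' : EdgeCfg d | (0 : Pt d) ∈ pastOf d ω' x}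
              (fun ω' => ((compOf d ω' 0 ∩ {p : Pt d | linf p ≤ 4 * r}).ncard : ℝ≥0∞)) ω ∂μ
        else 0 := by
  rw [ge_iff_le, tsum_eq_sum (s := annulus d r) fun x hx => if_neg (mt mem_annulus.2 hx)]
  calc _ ≤ ∑ x ∈ annulus d r, ∫⁻ ω, {ω' | 0 ∈ pastOf d ω' x}.indicator
          (compBallCard d (4 * r))⁻¹ (shiftCfg d x ω) ∂μ :=
        Finset.sum_le_sum fun x hx => (if_pos (mem_annulus.1 hx)).trans_le
          (sq_measure_pastOf_div_le hinv hforest _ x)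
    _ = ∫⁻ ω, ∑ x ∈ annulus d r, {ω' | 0 ∈ pastOf d ω' x}.indicator
          (compBallCard d (4 * r))⁻¹ (shiftCfg d x ω) ∂μ :=
        (lintegral_finsetSum' _ fun x _ =>
          (aemeasurable_indicator_pastOf hforest _ x).comp_quasiMeasurePreserving
            (measurePreserving_shiftCfg hinv x).quasiMeasurePreserving).symm
    _ ≤ ∫⁻ ω, {ω | ∃ v ∈ pastOf d ω 0, r < linf v}.indicator 1 ω ∂μ :=
        lintegral_mono fun ω => sum_annulus_indicator_pastOf_shiftCfg_le ω r
    _ ≤ _ := lintegral_indicator_one_le _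

/-- **Mass-transport diameter bound** (Theorem on the past of the origin).  If `μ` is a
translation-invariant probability measure on edge configurations that is a.s. a spanning
forest with infinite one-ended components, then for every `r ≥ 1`:
`μ(diam(past_o) > r) ≥ Σ_{x : r < ‖x‖∞ ≤ 2r} μ(o ∈ past_x)² / E_μ[|T_o ∩ D_o(4r)|·1_{o ∈ past_x}]`. -/
theorem mass_transport_diam_past (d : ℕ) (hd : 1 ≤ d)
    (μ : Measure (EdgeCfg d)) [IsProbabilityMeasure μ]
    (hinv : ∀ v : Pt d, μ.map (shiftCfg d v) = μ)
    (hforest : ∀ᵐ ω ∂μ, IsOneEndedForest d ω)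
    (r : ℕ) (hr : 1 ≤ r) :
    μ {ω | ∃ v ∈ pastOf d ω 0, r < linf v} ≥
      ∑' x : Pt d,
        if r < linf x ∧ linf x ≤ 2 * r then
          (μ {ω | (0 : Pt d) ∈ pastOf d ω x}) ^ 2 /
            ∫⁻ ω, Set.indicator {ω' : EdgeCfg d | (0 : Pt d) ∈ pastOf d ω' x}
              (fun ω' => ((compOf d ω' 0 ∩ {p : Pt d | linf p ≤ 4 * r}).ncard : ℝ≥0∞)) ω ∂μ
        else 0 :=
  mass_transport_diam_past_general d μ hinv hforest r
end
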